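/- Let F = (F_1,…,F_r) be an r-tuple of formal power series in R[[x_1,…,x_r]] and let Φ = (Φ_1,…,Φ_r) be the unique r-tuple of elements of A satisfying Φ_m = F_m(X + SΦ) for all m. Define two r-tuples of elements of A: A_i := x_i − Σ_{j=1}^r s_{ij}·F_j(X) and B_i := x_i + Σ_{j=1}^r s_{ij}·Φ_j. Then A and B are formally inverse to each other in the x-variables: substituting (B_1,…,B_r) for (x_1,…,x_r) in A_i (leaving the s-variables fixed) yields x_i for every i, and substituting (A_1,…,A_r) for (x_1,…,x_r) in B_i yields x_i for every i. -/

import Mathlib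

/-!
For tuples without constant term `substT` agrees with Mathlib's `MvPowerSeries.subst`, which is
an algebra map and is compatible with composition.
Substituting `B` into `A` gives `x_i + Σ_j s_ij Φ_j - Σ_j s_ij F_j(B) = x_i` by the defining
equation of `Φ`. For the other composite, `Ψ_j := Φ_j(A)` and `F_j(X)` both solve
`Ψ_j = F_j(A + SΨ)`. Multiplication by `S` raises the degree in the `s`-variables, so by induction
on that degree the two solutions agree, and `B(A) = A + S F(X) = X`.
-/

/-- Index type for the variables `s_{ij}`, `1 ≤ i ≤ j ≤ r`. -/
def SVar (r : ℕ) := {p : Fin r × Fin r // p.1 ≤ p.2}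

instance {r : ℕ} : DecidableEq (SVar r) :=
  inferInstanceAs (DecidableEq {p : Fin r × Fin r // p.1 ≤ p.2})

instance {r : ℕ} : Fintype (SVar r) :=
  inferInstanceAs (Fintype {p : Fin r × Fin r // p.1 ≤ p.2})

/-- The index of the variable `s_{ij} = s_{ji}` for arbitrary `i j`. -/
def sIdx {r : ℕ} (i j : Fin r) : SVar r :=
  if h : i ≤ j then ⟨(i, j), h⟩ else ⟨(j, i), (not_le.mp h).le⟩

/-- Formal partial derivative `∂f/∂x_i` of a multivariate formal power series:
the coefficient of `∂f/∂x_i` at a monomial `m` is `(m i + 1) · (coeff of f at m + {i})`. -/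
noncomputable def pd {σ : Type*} (R : Type*) [CommSemiring R]
    (i : σ) (f : MvPowerSeries σ R) : MvPowerSeries σ R :=
  fun m => (((m i) + 1 : ℕ) : R) * MvPowerSeries.coeff (R := R) (m + Finsupp.single i 1) f

/-- Substitution of `s_{ij} = 0` for all `i ≤ j`: restriction to the `x`-variables. -/
noncomputable def resS0 {r : ℕ} {R : Type*} [CommSemiring R]
    (f : MvPowerSeries (Fin r ⊕ SVar r) R) : MvPowerSeries (Fin r) R :=
  fun m => MvPowerSeries.coeff (R := R) (Finsupp.mapDomain Sum.inl m) f

/-- Total degree of a monomial. -/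
def mdeg {σ : Type*} (m : σ →₀ ℕ) : ℕ := m.sum fun _ e => e

/-- Formal substitution `F(G) = Σ_m (coeff_m F) · ∏_i G_i^{m_i}`, for tuples `G` whose
components have zero constant coefficient, computed coefficientwise: since
`∏ G_i^{m_i}` has order `≥ |m|`, only multi-indices `m` with `|m| ≤ deg μ` (in
particular `m ≤ (deg μ, …, deg μ)`) contribute to the coefficient at `μ`. -/
noncomputable def substT {σ τ R : Type*} [Fintype σ] [DecidableEq σ] [CommRing R]
    (F : MvPowerSeries σ R) (G : σ → MvPowerSeries τ R) : MvPowerSeries τ R :=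
  fun μ => MvPowerSeries.coeff (R := R) μ
    (∑ m ∈ Finset.Iic (Finsupp.equivFunOnFinite.symm (fun _ : σ => mdeg μ)),
      MvPowerSeries.coeff (R := R) m F • ∏ i, (G i) ^ (m i))

/-- The tuple `A_i := x_i − Σ_j s_{ij}·F_j(X)`, with `F_j(X)` viewed in `A` via the
canonical substitution `x_p ↦ x_p`. -/
noncomputable def mapAt {r : ℕ} {R : Type*} [CommRing R]
    (F : Fin r → MvPowerSeries (Fin r) R) (i : Fin r) :
    MvPowerSeries (Fin r ⊕ SVar r) R :=
  MvPowerSeries.X (Sum.inl i) -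
    ∑ j, MvPowerSeries.X (Sum.inr (sIdx i j)) *
      substT (F j) (fun p => (MvPowerSeries.X (Sum.inl p) : MvPowerSeries (Fin r ⊕ SVar r) R))

/-- The tuple `B_i := x_i + Σ_j s_{ij}·Φ_j`. -/
noncomputable def mapBt {r : ℕ} {R : Type*} [CommRing R]
    (Φ : Fin r → MvPowerSeries (Fin r ⊕ SVar r) R) (i : Fin r) :
    MvPowerSeries (Fin r ⊕ SVar r) R :=
  MvPowerSeries.X (Sum.inl i) +
    ∑ j, MvPowerSeries.X (Sum.inr (sIdx i j)) * Φ j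

namespace MvPowerSeries

variable {σ τ R : Type*} [CommRing R]

theorem substT_eq_subst [Fintype σ] [DecidableEq σ] (F : MvPowerSeries σ R)
    {G : σ → MvPowerSeries τ R} (hG : ∀ i, constantCoeff (G i) = 0) :
    substT F G = subst G F := by
  ext μ
  have hcoeff : coeff μ (substT F G) = ∑ m ∈ Finset.Iic (Finsupp.equivFunOnFinite.symm
      (fun _ : σ => μ.degree)), coeff m F • coeff μ (∏ i, G i ^ m i) := map_sum (coeff μ) _ _
  rw [hcoeff, coeff_subst (hasSubst_of_constantCoeff_zero hG)]
  simp only [Finsupp.prod_fintype _ _ (fun _ => pow_zero _)]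
  refine (finsum_eq_sum_of_support_subset _ fun m hm => ?_).symm
  by_contra hmI
  obtain ⟨i, hi⟩ : ∃ i, μ.degree < m i := by
    simpa [Finsupp.le_def] using hmI
  refine hm (show coeff m F • coeff μ (∏ j, G j ^ m j) = 0 from ?_)
  rw [coeff_of_lt_order (d := μ), smul_zero]
  calc (μ.degree : ℕ∞) < m i := by exact_mod_cast hi
    _ ≤ ∑ j, (m j : ℕ∞) := by
      exact_mod_cast Finset.single_le_sum (fun j _ => Nat.zero_le (m j)) (Finset.mem_univ i)
    _ ≤ ∑ j, (G j ^ m j).order :=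
      Finset.sum_le_sum fun j _ => le_order_pow_of_constantCoeff_eq_zero _ (hG j)
    _ ≤ _ := le_order_prod _ _

variable (R) in
def weightedOrderIdeal (w : σ → ℕ) (n : ℕ) : Ideal (MvPowerSeries σ R) where
  carrier := {f | n ≤ f.weightedOrder w}
  zero_mem' := by simp
  add_mem' hf hg := (le_min hf hg).trans (min_weightedOrder_le_add w)
  smul_mem' c _ hf := hf.trans (le_add_self.trans (le_weightedOrder_mul w))

variable {w : σ → ℕ} {n : ℕ}

theorem mem_weightedOrderIdeal_iff {f : MvPowerSeries σ R} :
    f ∈ weightedOrderIdeal R w n ↔ ∀ d : σ →₀ ℕ, Finsupp.weight w d < n → coeff d f = 0 :=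
  ⟨fun hf _ hd => coeff_eq_zero_of_lt_weightedOrder w ((Nat.cast_lt.mpr hd).trans_le hf),
    nat_le_weightedOrder w⟩

theorem constantCoeff_eq_zero_of_mem_weightedOrderIdeal (hn : n ≠ 0)
    {f : MvPowerSeries σ R} (hf : f ∈ weightedOrderIdeal R w n) : constantCoeff f = 0 :=
  mem_weightedOrderIdeal_iff.mp hf 0 (by simpa [Nat.pos_iff_ne_zero])

theorem mul_mem_weightedOrderIdeal {m : ℕ} {f g : MvPowerSeries σ R}
    (hf : f ∈ weightedOrderIdeal R w m) (hg : g ∈ weightedOrderIdeal R w n) :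
    f * g ∈ weightedOrderIdeal R w (m + n) := by
  change ((m + n : ℕ) : ℕ∞) ≤ _
  push_cast
  exact (add_le_add hf hg).trans (le_weightedOrder_mul w)

theorem X_mem_weightedOrderIdeal [DecidableEq σ] {v : σ} (hv : w v = 1) :
    X v ∈ weightedOrderIdeal R w 1 := by
  rw [mem_weightedOrderIdeal_iff]
  intro d hd
  rw [coeff_X, if_neg]
  rintro rfl
  simp [Finsupp.weight_single, hv] at hd

theorem eq_zero_of_forall_mem_weightedOrderIdeal {f : MvPowerSeries σ R}
    (hf : ∀ n, f ∈ weightedOrderIdeal R w n) : f = 0 := by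
  ext d
  exact mem_weightedOrderIdeal_iff.mp (hf (Finsupp.weight w d + 1)) d (Nat.lt_succ_self _)

theorem subst_sub_subst_mem_weightedOrderIdeal {a b : τ → MvPowerSeries σ R}
    (ha : HasSubst a) (hb : HasSubst b) (hab : ∀ i, a i - b i ∈ weightedOrderIdeal R w n)
    (F : MvPowerSeries τ R) : subst a F - subst b F ∈ weightedOrderIdeal R w n := by
  rw [mem_weightedOrderIdeal_iff]
  intro μ hμ
  have hprod (m : τ →₀ ℕ) : coeff μ (m.prod fun i e => a i ^ e) =
      coeff μ (m.prod fun i e => b i ^ e) := by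
    have : (m.prod fun i e => a i ^ e) - (m.prod fun i e => b i ^ e) ∈
        weightedOrderIdeal R w n := by
      rw [← Ideal.Quotient.eq, map_finsuppProd, map_finsuppProd]
      simp only [map_pow, Ideal.Quotient.eq.mpr (hab _)]
    rw [← sub_eq_zero, ← map_sub]
    exact mem_weightedOrderIdeal_iff.mp this μ hμ
  rw [map_sub, coeff_subst ha, coeff_subst hb, sub_eq_zero]
  simp only [hprod]

variable {ι κ : Type*}

theorem fixedPoint_subst_unique [Finite ι] [Fintype κ] (F : κ → MvPowerSeries ι R)
    {K : ι → MvPowerSeries σ R} {L : ι → κ → MvPowerSeries σ R}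
    (hK : ∀ p, constantCoeff (K p) = 0) (hL : ∀ p q, L p q ∈ weightedOrderIdeal R w 1)
    {ψ θ : κ → MvPowerSeries σ R}
    (hψ : ∀ j, ψ j = subst (fun p => K p + ∑ q, L p q * ψ q) (F j))
    (hθ : ∀ j, θ j = subst (fun p => K p + ∑ q, L p q * θ q) (F j)) : ψ = θ := by
  have hasSubst (φ : κ → MvPowerSeries σ R) :
      HasSubst fun p => K p + ∑ q, L p q * φ q := by
    refine hasSubst_of_constantCoeff_zero fun p => ?_
    simp [hK, constantCoeff_eq_zero_of_mem_weightedOrderIdeal one_ne_zero (hL _ _)]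
  have hmem (n : ℕ) : ∀ j, ψ j - θ j ∈ weightedOrderIdeal R w n := by
    induction n with
    | zero => simp [weightedOrderIdeal]
    | succ n ih =>
      intro j
      rw [hψ, hθ]
      refine subst_sub_subst_mem_weightedOrderIdeal (hasSubst ψ) (hasSubst θ) (fun p => ?_) _
      rw [add_sub_add_left_eq_sub, ← Finset.sum_sub_distrib]
      refine Ideal.sum_mem _ fun q _ => ?_
      rw [← mul_sub, add_comm]
      exact mul_mem_weightedOrderIdeal (hL p q) (ih q)
  funext j
  exact sub_eq_zero.mp (eq_zero_of_forall_mem_weightedOrderIdeal fun n => hmem n j)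

end MvPowerSeries

open MvPowerSeries

section

variable {r : ℕ} {R : Type*} [CommRing R]

theorem mapAt_eq_sub_sum_subst (F : Fin r → MvPowerSeries (Fin r) R) (i : Fin r) :
    mapAt F i = X (Sum.inl i) -
      ∑ j, X (Sum.inr (sIdx i j)) * subst (fun p => X (Sum.inl p)) (F j) := by
  simp only [mapAt, substT_eq_subst _ fun _ => constantCoeff_X _]

theorem constantCoeff_mapAt (F : Fin r → MvPowerSeries (Fin r) R) (i : Fin r) :
    constantCoeff (mapAt F i) = 0 := by
  simp [mapAt_eq_sub_sum_subst]

theorem constantCoeff_mapBt (Φ : Fin r → MvPowerSeries (Fin r ⊕ SVar r) R) (i : Fin r) :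
    constantCoeff (mapBt Φ i) = 0 := by
  simp [mapBt]

variable {G : Fin r ⊕ SVar r → MvPowerSeries (Fin r ⊕ SVar r) R}

theorem subst_mapAt (hG : HasSubst G) (F : Fin r → MvPowerSeries (Fin r) R) (i : Fin r) :
    subst G (mapAt F i) = G (Sum.inl i) -
      ∑ j, G (Sum.inr (sIdx i j)) * subst (fun p => G (Sum.inl p)) (F j) := by
  rw [mapAt_eq_sub_sum_subst, ← coe_substAlgHom hG]
  simp only [map_sub, map_sum, map_mul, substAlgHom_X, coe_substAlgHom]
  congr! with j
  rw [subst_comp_subst_apply (hasSubst_of_constantCoeff_zero fun _ => constantCoeff_X _) hG]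
  simp only [subst_X hG]

theorem subst_mapBt (hG : HasSubst G) (Φ : Fin r → MvPowerSeries (Fin r ⊕ SVar r) R)
    (i : Fin r) :
    subst G (mapBt Φ i) = G (Sum.inl i) + ∑ j, G (Sum.inr (sIdx i j)) * subst G (Φ j) := by
  rw [mapBt, ← coe_substAlgHom hG]
  simp only [map_add, map_sum, map_mul, substAlgHom_X]

end

theorem stmt6_general {r : ℕ} (R : Type*) [CommRing R]
    (F : Fin r → MvPowerSeries (Fin r) R)
    (Φ : Fin r → MvPowerSeries (Fin r ⊕ SVar r) R)
    (hΦ : ∀ m, Φ m = substT (F m) (mapBt Φ)) :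
    (∀ i, substT (mapAt F i)
        (Sum.elim (mapBt Φ) (fun v => MvPowerSeries.X (Sum.inr v))) =
      MvPowerSeries.X (Sum.inl i)) ∧
    (∀ i, substT (mapBt Φ i)
        (Sum.elim (mapAt F) (fun v => MvPowerSeries.X (Sum.inr v))) =
      MvPowerSeries.X (Sum.inl i)) := by
  set B := Sum.elim (mapBt Φ) fun v => X (Sum.inr v)
  set A := Sum.elim (mapAt F) fun v => X (Sum.inr v)
  have hB : ∀ v, constantCoeff (B v) = 0 := by rintro (i | v) <;> simp [B, constantCoeff_mapBt]
  have hA : ∀ v, constantCoeff (A v) = 0 := by rintro (i | v) <;> simp [A, constantCoeff_mapAt]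
  have hΦ' (m : Fin r) : Φ m = subst (mapBt Φ) (F m) :=
    (hΦ m).trans (substT_eq_subst _ (constantCoeff_mapBt Φ))
  simp only [substT_eq_subst _ hB, substT_eq_subst _ hA]
  have hBs := hasSubst_of_constantCoeff_zero hB
  have hAs := hasSubst_of_constantCoeff_zero hA
  refine ⟨fun i => ?_, fun i => ?_⟩
  · rw [subst_mapAt hBs]
    simp only [B, Sum.elim_inl, Sum.elim_inr, ← hΦ']
    rw [mapBt, add_sub_cancel_right]
  · have hΦA : (fun j => subst A (Φ j)) = fun j => subst (fun p => X (Sum.inl p)) (F j) := by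
      refine fixedPoint_subst_unique (w := Sum.elim 0 1) F (constantCoeff_mapAt F)
        (L := fun p q => X (Sum.inr (sIdx p q))) (fun p q => X_mem_weightedOrderIdeal rfl)
        (fun j => ?_) (fun j => ?_)
      · rw [hΦ', subst_comp_subst_apply (hasSubst_of_constantCoeff_zero (constantCoeff_mapBt Φ))
          hAs]
        simp only [subst_mapBt hAs, A, Sum.elim_inl, Sum.elim_inr]
      · simp only [mapAt_eq_sub_sum_subst, sub_add_cancel]
    rw [subst_mapBt hAs]
    simp only [congrFun hΦA, A, Sum.elim_inl, Sum.elim_inr, mapAt_eq_sub_sum_subst, sub_add_cancel]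

/-- If `Φ` satisfies `Φ_m = F_m(X + SΦ)`, then the maps
`A_i = x_i − Σ_j s_{ij}F_j(X)` and `B_i = x_i + Σ_j s_{ij}Φ_j` are formally inverse to
each other in the `x`-variables (the `s`-variables being fixed). -/
theorem stmt6 {r : ℕ} (hr : 1 ≤ r) (R : Type*) [CommRing R] [Algebra ℚ R]
    (F : Fin r → MvPowerSeries (Fin r) R)
    (Φ : Fin r → MvPowerSeries (Fin r ⊕ SVar r) R)
    (hΦ : ∀ m, Φ m = substT (F m) (mapBt Φ)) :
    (∀ i, substT (mapAt F i)
        (Sum.elim (mapBt Φ) (fun v => MvPowerSeries.X (Sum.inr v))) =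
      MvPowerSeries.X (Sum.inl i)) ∧
    (∀ i, substT (mapBt Φ i)
        (Sum.elim (mapAt F) (fun v => MvPowerSeries.X (Sum.inr v))) =
      MvPowerSeries.X (Sum.inl i)) :=
  stmt6_general R F Φ hΦ
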